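/- The element R is invertible in A ⊗ A, with inverse R⁻¹ = (S ⊗ id)(R) = (1/(2N)) Σ_{j,k ∈ ℤ_{2N}} t^{jk} K^{−j} ⊗ K^{−k}; that is, R·((1/(2N)) Σ_{j,k ∈ ℤ_{2N}} t^{jk} K^{−j} ⊗ K^{−k}) = 1 ⊗ 1 = ((1/(2N)) Σ_{j,k ∈ ℤ_{2N}} t^{jk} K^{−j} ⊗ K^{−k})·R. -/

import Mathlib

/-!
With `ψ` the standard primitive additive character of `ℤ_{2N}`, `t^{-jk} = ψ(-jk)`. Summing over
`k` first gives `R = (1/2N) Σ_a K^a ⊗ e_a` with `e_a = Σ_b ψ(-ab) K^b`, and applying `S ⊗ id`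
gives `(1/2N) Σ_a K^{-a} ⊗ e_a`. Orthogonality of characters makes the `e_a` orthogonal:
`e_a e_c = δ_{ac} 2N e_a` and `Σ_a e_a = 2N`, so the product of the two collapses to `1 ⊗ 1`.
-/

open Finset TensorProduct

noncomputable section

/-- The quantum group `U_t(u(1)) = ℂ[ℤ_{2N}]`, the complex group algebra of the cyclic group
`ℤ_{2N}`. -/
abbrev QG (N : ℕ) := MonoidAlgebra ℂ (Multiplicative (ZMod (2 * N)))

/-- The basis element `K^j`, `j ∈ ℤ_{2N}` (`K` is the image of the fixed generator `1`). -/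
def KK (N : ℕ) (j : ZMod (2 * N)) : QG N :=
  MonoidAlgebra.single (Multiplicative.ofAdd j) 1

/-- `t = exp(πi/N)`, a primitive `2N`-th root of unity. -/
def tq (N : ℕ) : ℂ := Complex.exp ((Real.pi : ℂ) * Complex.I / N)

/-- The universal `R`-matrix `R = (1/2N) Σ_{j,k ∈ ℤ_{2N}} t^{−jk} K^j ⊗ K^k`. -/
def Rmat (N : ℕ) : QG N ⊗[ℂ] QG N :=
  (2 * (N : ℂ))⁻¹ • ∑ j ∈ Finset.range (2 * N), ∑ k ∈ Finset.range (2 * N),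
    tq N ^ (-((j : ℤ) * (k : ℤ))) • (KK N (j : ZMod (2 * N)) ⊗ₜ[ℂ] KK N (k : ZMod (2 * N)))

/-- The comultiplication `Δ : A → A ⊗ A`, `Δ(K^j) = K^j ⊗ K^j`. -/
def DeltaQG (N : ℕ) : QG N →ₐ[ℂ] QG N ⊗[ℂ] QG N :=
  (MonoidAlgebra.lift ℂ (QG N ⊗[ℂ] QG N) (Multiplicative (ZMod (2 * N))))
    { toFun := fun x => MonoidAlgebra.single x 1 ⊗ₜ[ℂ] MonoidAlgebra.single x 1
      map_one' := by
        simp [MonoidAlgebra.one_def, Algebra.TensorProduct.one_def]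
      map_mul' := fun x y => by
        simp only [Algebra.TensorProduct.tmul_mul_tmul, MonoidAlgebra.single_mul_single,
          one_mul] }

/-- The antipode `S : A → A`, `S(K^j) = K^{−j}`. -/
def SQG (N : ℕ) : QG N →ₐ[ℂ] QG N :=
  (MonoidAlgebra.lift ℂ (QG N) (Multiplicative (ZMod (2 * N))))
    { toFun := fun x => MonoidAlgebra.single x⁻¹ 1
      map_one' := by simp [MonoidAlgebra.one_def]
      map_mul' := fun x y => by
        simp only [mul_inv, MonoidAlgebra.single_mul_single, one_mul] }

/-- The claimed inverse `(1/2N) Σ_{j,k ∈ ℤ_{2N}} t^{jk} K^{−j} ⊗ K^{−k}` of the `R`-matrix. -/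
def RmatInv (N : ℕ) : QG N ⊗[ℂ] QG N :=
  (2 * (N : ℂ))⁻¹ • ∑ j ∈ Finset.range (2 * N), ∑ k ∈ Finset.range (2 * N),
    tq N ^ ((j : ℤ) * (k : ℤ)) •
      (KK N (-(j : ZMod (2 * N))) ⊗ₜ[ℂ] KK N (-(k : ZMod (2 * N))))

lemma Finset.sum_range_zmod {M : Type*} [AddCommMonoid M] (n : ℕ) [NeZero n] (f : ZMod n → M) :
    ∑ j ∈ range n, f j = ∑ a, f a :=
  Finset.sum_nbij' (↑) ZMod.val (fun _ _ => mem_univ _) (fun a _ => mem_range.mpr a.val_lt)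
    (fun _ hj => ZMod.val_cast_of_lt (mem_range.mp hj)) (fun a _ => ZMod.natCast_zmod_val a)
    fun _ _ => rfl

section FourierElem

open MonoidAlgebra

variable {k R : Type*} [Field k] [CommRing R] [Fintype R]

/-- `#R` times the minimal idempotent of `k[R]` on which `K^b` acts by `ψ (a * b)`. -/
def fourierElem (ψ : AddChar R k) (a : R) : MonoidAlgebra k (Multiplicative R) :=
  ∑ b, ψ (-(a * b)) • single (Multiplicative.ofAdd b) 1

variable (ψ : AddChar R k)

lemma single_mul_fourierElem (a b : R) :
    single (Multiplicative.ofAdd b) 1 * fourierElem ψ a = ψ (a * b) • fourierElem ψ a := by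
  simp only [fourierElem, Finset.mul_sum, Finset.smul_sum, mul_smul_comm, single_mul_single,
    mul_one, smul_smul, ← ofAdd_add]
  refine Fintype.sum_equiv (Equiv.addLeft b) _ _ fun d => ?_
  simp only [Equiv.coe_addLeft, ← AddChar.map_add_eq_mul]
  congr 2
  ring

lemma fourierElem_mul_fourierElem [DecidableEq R] (hψ : ψ.IsPrimitive) (a c : R) :
    fourierElem ψ a * fourierElem ψ c =
      if a = c then (Fintype.card R : k) • fourierElem ψ c else 0 := by
  have hsum : ∑ b, ψ (-(a * b)) * ψ (c * b) =
      ((if c - a = 0 then Fintype.card R else 0 : ℕ) : k) := by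
    rw [← AddChar.sum_mulShift _ hψ]
    refine Finset.sum_congr rfl fun b _ => ?_
    rw [← AddChar.map_add_eq_mul]
    ring_nf
  conv_lhs => rw [fourierElem, Finset.sum_mul]
  simp only [smul_mul_assoc, single_mul_fourierElem, smul_smul, ← Finset.sum_smul, hsum,
    Nat.cast_ite, Nat.cast_zero, sub_eq_zero, eq_comm (a := c)]
  split_ifs <;> simp

lemma sum_fourierElem [DecidableEq R] (hψ : ψ.IsPrimitive) :
    ∑ a, fourierElem ψ a = (Fintype.card R : k) • 1 := by
  simp only [fourierElem]
  rw [Finset.sum_comm]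
  simp only [← Finset.sum_smul, neg_mul_eq_mul_neg, AddChar.sum_mulShift _ hψ, neg_eq_zero,
    Nat.cast_ite, Nat.cast_zero, ite_smul, zero_smul, Finset.sum_ite_eq', Finset.mem_univ,
    if_true, ofAdd_zero, one_def]

/-- `#R` times the `R`-matrix `(1/#R) Σ_{a,b} ψ(-ab) K^a ⊗ K^b`, summed over `b` first. -/
def rMatrix : MonoidAlgebra k (Multiplicative R) ⊗[k] MonoidAlgebra k (Multiplicative R) :=
  ∑ a, single (Multiplicative.ofAdd a) 1 ⊗ₜ fourierElem ψ a

def rMatrixInv : MonoidAlgebra k (Multiplicative R) ⊗[k] MonoidAlgebra k (Multiplicative R) :=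
  ∑ a, single (Multiplicative.ofAdd (-a)) 1 ⊗ₜ fourierElem ψ a

lemma rMatrix_mul_rMatrixInv [DecidableEq R] (hψ : ψ.IsPrimitive) :
    rMatrix ψ * rMatrixInv ψ = (Fintype.card R : k) ^ 2 • 1 := by
  simp only [rMatrix, rMatrixInv, Finset.sum_mul_sum, Algebra.TensorProduct.tmul_mul_tmul,
    single_mul_single, mul_one, ← ofAdd_add, fourierElem_mul_fourierElem ψ hψ, tmul_ite,
    Finset.sum_ite_eq, Finset.mem_univ, if_true, add_neg_cancel, ofAdd_zero,
    ← one_def, tmul_smul, ← Finset.smul_sum, ← tmul_sum, sum_fourierElem ψ hψ, smul_smul, sq]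
  rw [Algebra.TensorProduct.one_def]

end FourierElem

section QG

open MonoidAlgebra

variable (N : ℕ)

lemma SQG_single (a : ZMod (2 * N)) :
    SQG N (single (Multiplicative.ofAdd a) 1) = single (Multiplicative.ofAdd (-a)) 1 := by
  simp only [SQG, lift_single, one_smul]
  rfl

variable [NeZero N]

lemma tq_zpow (m : ℤ) : tq N ^ m = ZMod.stdAddChar (m : ZMod (2 * N)) := by
  rw [ZMod.stdAddChar_coe, tq, ← Complex.exp_int_mul]
  congr 1
  field_simp
  push_cast
  ring

lemma Rmat_eq : Rmat N = (2 * (N : ℂ))⁻¹ • rMatrix ZMod.stdAddChar := by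
  simp only [Rmat, rMatrix, fourierElem, KK, tmul_sum, tmul_smul, tq_zpow, Int.cast_neg,
    Int.cast_mul, Int.cast_natCast]
  congr 1
  rw [← Finset.sum_range_zmod]
  exact Finset.sum_congr rfl fun j _ => by rw [← Finset.sum_range_zmod]

lemma RmatInv_eq : RmatInv N = (2 * (N : ℂ))⁻¹ • rMatrixInv ZMod.stdAddChar := by
  simp only [RmatInv, rMatrixInv, fourierElem, KK, tmul_sum, tmul_smul, tq_zpow,
    Int.cast_mul, Int.cast_natCast]
  congr 1
  rw [← Finset.sum_range_zmod]
  refine Finset.sum_congr rfl fun j _ => ?_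
  rw [← Equiv.sum_comp (Equiv.neg (ZMod (2 * N))), ← Finset.sum_range_zmod]
  simp only [Equiv.neg_apply, mul_neg, neg_neg]

lemma map_SQG_rMatrix :
    Algebra.TensorProduct.map (SQG N) (AlgHom.id ℂ (QG N)) (rMatrix ZMod.stdAddChar) =
      rMatrixInv ZMod.stdAddChar := by
  simp only [rMatrix, rMatrixInv, map_sum, Algebra.TensorProduct.map_tmul, SQG_single,
    AlgHom.id_apply]

end QG

theorem stmt_9_general (N : ℕ) (hpos : 0 < N) :
    (Algebra.TensorProduct.map (SQG N) (AlgHom.id ℂ (QG N))) (Rmat N) = RmatInv N ∧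
    Rmat N * RmatInv N = 1 ∧ RmatInv N * Rmat N = 1 := by
  have : NeZero N := ⟨hpos.ne'⟩
  have hN : (2 * (N : ℂ)) ≠ 0 := by simp [hpos.ne']
  have hmul : Rmat N * RmatInv N = 1 := by
    rw [Rmat_eq, RmatInv_eq, smul_mul_smul_comm,
      rMatrix_mul_rMatrixInv _ (ZMod.isPrimitive_stdAddChar _), smul_smul, ZMod.card,
      Nat.cast_mul, Nat.cast_ofNat, ← mul_inv, ← sq, inv_mul_cancel₀ (pow_ne_zero 2 hN), one_smul]
  refine ⟨?_, hmul, (mul_comm _ _).trans hmul⟩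
  rw [Rmat_eq, RmatInv_eq, map_smul, map_SQG_rMatrix]

/-- `R` is invertible in `A ⊗ A`, with inverse `R⁻¹ = (S ⊗ id)(R) =
(1/2N) Σ_{j,k ∈ ℤ_{2N}} t^{jk} K^{−j} ⊗ K^{−k}`. -/
theorem stmt_9 (N : ℕ) (hpos : 0 < N) (hN : Even N) :
    (Algebra.TensorProduct.map (SQG N) (AlgHom.id ℂ (QG N))) (Rmat N) = RmatInv N ∧
    Rmat N * RmatInv N = 1 ∧ RmatInv N * Rmat N = 1 :=
  stmt_9_general N hpos
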